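/- (Pataki–Barvinok rank bound, used instance) Let the feasible set of an SDP be {Y ∈ 𝕊ᵈ : Y ⪰ 0, ⟨Aⱼ, Y⟩ = bⱼ for j = 1,…,m}. Every extreme point Y of this set has rank r satisfying r(r+1)/2 ≤ m. -/

import Mathlib

open Matrix


lemma two_mul_card_pairs (α : Type*) [Fintype α] [LinearOrder α] :
    2 * Fintype.card {p : α × α // p.1 ≤ p.2} = Fintype.card α * (Fintype.card α + 1) := by
  rw [← Fintype.card_congr (Sym2.sortEquiv (α := α)), Sym2.card, Nat.choose_two_right,
    Nat.add_sub_cancel, Nat.mul_comm (Fintype.card α + 1)]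
  have h2 : 2 ∣ Fintype.card α * (Fintype.card α + 1) :=
    (Nat.even_mul_succ_self (Fintype.card α)).two_dvd
  omega

section symOf
variable {P : Type*} [LinearOrder P]

noncomputable def symOf (f : {p : P × P // p.1 ≤ p.2} → ℝ) : Matrix P P ℝ :=
  Matrix.of fun i j => if h : i ≤ j then f ⟨(i, j), h⟩ else f ⟨(j, i), le_of_not_ge h⟩

lemma symOf_add (f g : {p : P × P // p.1 ≤ p.2} → ℝ) :
    symOf (f + g) = symOf f + symOf g := by
  ext i j
  simp only [symOf, Matrix.of_apply, Matrix.add_apply, Pi.add_apply]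
  split <;> rfl

lemma symOf_smul (c : ℝ) (f : {p : P × P // p.1 ≤ p.2} → ℝ) :
    symOf (c • f) = c • symOf f := by
  ext i j
  simp only [symOf, Matrix.of_apply, Matrix.smul_apply, Pi.smul_apply]
  split <;> rfl

lemma symOf_isSymm (f : {p : P × P // p.1 ≤ p.2} → ℝ) : (symOf f).IsSymm := by
  ext i j
  simp only [symOf, Matrix.transpose_apply, Matrix.of_apply]
  rcases le_or_gt j i with h | h
  · rcases eq_or_lt_of_le h with rfl | h'
    · split <;> rfl
    · rw [dif_pos h, dif_neg (not_le.2 h')]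
  · rw [dif_neg (not_le.2 h), dif_pos h.le]

lemma symOf_eq_zero (f : {p : P × P // p.1 ≤ p.2} → ℝ) (h : symOf f = 0) : f = 0 := by
  funext p
  have := congrFun (congrFun h p.1.1) p.1.2
  simpa [symOf, p.2] using this

end symOf

lemma quad_abs_bound {n : Type*} [Fintype n] (S : Matrix n n ℝ) (x : n → ℝ) :
    |x ⬝ᵥ (S *ᵥ x)| ≤ (∑ i, ∑ j, |S i j|) * ∑ i, x i ^ 2 := by
  have hX : ∀ i j : n, |x i| * |x j| ≤ ∑ k, x k ^ 2 := by
    intro i j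
    have h1 : |x i| * |x j| ≤ (x i ^ 2 + x j ^ 2) / 2 := by
      nlinarith [sq_abs (x i), sq_abs (x j), sq_nonneg (|x i| - |x j|)]
    have h2 : x i ^ 2 ≤ ∑ k, x k ^ 2 :=
      Finset.single_le_sum (fun k _ => sq_nonneg (x k)) (Finset.mem_univ i)
    have h3 : x j ^ 2 ≤ ∑ k, x k ^ 2 :=
      Finset.single_le_sum (fun k _ => sq_nonneg (x k)) (Finset.mem_univ j)
    linarith
  calc |x ⬝ᵥ (S *ᵥ x)| = |∑ i, ∑ j, x i * (S i j * x j)| := by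
        simp [dotProduct, mulVec, Finset.mul_sum]
    _ ≤ ∑ i, ∑ j, |x i * (S i j * x j)| := by
        refine (Finset.abs_sum_le_sum_abs _ _).trans ?_
        exact Finset.sum_le_sum fun i _ => Finset.abs_sum_le_sum_abs _ _
    _ ≤ ∑ i, ∑ j, |S i j| * ∑ k, x k ^ 2 := by
        refine Finset.sum_le_sum fun i _ => Finset.sum_le_sum fun j _ => ?_
        rw [abs_mul, abs_mul]
        calc |x i| * (|S i j| * |x j|) = |S i j| * (|x i| * |x j|) := by ring
          _ ≤ |S i j| * ∑ k, x k ^ 2 :=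
              mul_le_mul_of_nonneg_left (hX i j) (abs_nonneg _)
    _ = (∑ i, ∑ j, |S i j|) * ∑ i, x i ^ 2 := by
        rw [Finset.sum_mul]
        exact Finset.sum_congr rfl fun i _ => (Finset.sum_mul _ _ _).symm

lemma one_add_smul_posSemidef {n : Type*} [Fintype n] [DecidableEq n]
    (S : Matrix n n ℝ) (hS : S.IsSymm) (δ : ℝ)
    (hδ : |δ| * (∑ i, ∑ j, |S i j|) ≤ 1) :
    (1 + δ • S).PosSemidef := by
  rw [Matrix.posSemidef_iff_dotProduct_mulVec]
  constructor
  · have hSh : S.IsHermitian := by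
      ext i j
      simp only [conjTranspose_apply, star_trivial]
      exact congrFun (congrFun hS i) j
    have hs : (δ • S).IsHermitian := by
      show (δ • S)ᴴ = δ • S
      rw [conjTranspose_smul, star_trivial, hSh.eq]
    simpa using Matrix.IsHermitian.add (Matrix.isHermitian_one) hs
  · intro x
    simp only [star_trivial, add_mulVec, one_mulVec, smul_mulVec, dotProduct_add,
      dotProduct_smul, smul_eq_mul]
    have h1 : x ⬝ᵥ x = ∑ i, x i ^ 2 := by simp [dotProduct, sq]
    have h2 := quad_abs_bound S x
    have h3 : 0 ≤ ∑ i, x i ^ 2 := Finset.sum_nonneg fun i _ => sq_nonneg _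
    have h4 : |δ * (x ⬝ᵥ (S *ᵥ x))| ≤ ∑ i, x i ^ 2 := by
      rw [abs_mul]
      calc |δ| * |x ⬝ᵥ (S *ᵥ x)| ≤ |δ| * ((∑ i, ∑ j, |S i j|) * ∑ i, x i ^ 2) :=
            mul_le_mul_of_nonneg_left h2 (abs_nonneg _)
        _ = (|δ| * (∑ i, ∑ j, |S i j|)) * ∑ i, x i ^ 2 := by ring
        _ ≤ 1 * ∑ i, x i ^ 2 := mul_le_mul_of_nonneg_right hδ h3
        _ = ∑ i, x i ^ 2 := one_mul _
    have := abs_le.mp h4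
    rw [h1]
    linarith [this.1]

set_option maxHeartbeats 1000000 in
/-- Pataki–Barvinok rank bound. Let the feasible set of an SDP
be `{Y ∈ 𝕊ᵈ : Y ⪰ 0, ⟨Aⱼ, Y⟩ = bⱼ, j = 1,…,m}` (with `⟨A,B⟩ = tr(AB)`).
Every extreme point `Y` of this set has rank `r` satisfying
`r(r+1)/2 ≤ m` (stated as `r(r+1) ≤ 2m`). -/
theorem pataki_barvinok_rank_bound (d m : ℕ)
    (A : Fin m → Matrix (Fin d) (Fin d) ℝ) (hA : ∀ j, (A j).IsSymm)
    (b : Fin m → ℝ)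
    (C : Set (Matrix (Fin d) (Fin d) ℝ))
    (hC : C = {Y | Y.IsSymm ∧ Y.PosSemidef ∧ ∀ j, (A j * Y).trace = b j})
    (Y : Matrix (Fin d) (Fin d) ℝ)
    (hY : Y ∈ Set.extremePoints ℝ C) :
    Y.rank * (Y.rank + 1) ≤ 2 * m := by
  classical
  by_contra hlt
  push_neg at hlt
  obtain ⟨hYC, hext⟩ := hY
  have hYC' := hYC
  rw [hC] at hYC'
  obtain ⟨hYsymm, hYpsd, hYtr⟩ := hYC'
  have hH : Y.IsHermitian := hYpsd.1
  set lam : Fin d → ℝ := hH.eigenvalues with hlamdef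
  have hlam0 : ∀ i, 0 ≤ lam i := fun i => hYpsd.eigenvalues_nonneg i
  set U : Matrix (Fin d) (Fin d) ℝ := (hH.eigenvectorUnitary : Matrix (Fin d) (Fin d) ℝ)
    with hUdef
  have hUnit : (star U) * U = 1 := mem_unitaryGroup_iff'.mp hH.eigenvectorUnitary.2
  have hrank : Y.rank = Fintype.card {i : Fin d // lam i ≠ 0} :=
    hH.rank_eq_card_non_zero_eigs
  set Pt := {i : Fin d // lam i ≠ 0} with hPt
  -- the partial square root Q
  set Q : Matrix (Fin d) Pt ℝ :=
    Matrix.of (fun k (i : Pt) => Real.sqrt (lam i.1) * U k i.1) with hQdef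
  have hsum : ∀ g : Fin d → ℝ, (∀ i, lam i = 0 → g i = 0) →
      ∑ i : Pt, g i.1 = ∑ i, g i := by
    intro g hg
    rw [← Finset.sum_subtype (Finset.univ.filter (fun i => lam i ≠ 0))
      (by simp) g]
    exact Finset.sum_filter_of_ne fun i _ h0 => by
      by_contra hh
      exact h0 (hg i hh)
  have hQQH : Q * Qᴴ = Y := by
    have hspec := hH.spectral_theorem
    ext k l
    have hYentry : Y k l = ∑ i, lam i * (U k i * U l i) := by
      conv_lhs => rw [hspec]
      rw [Unitary.conjStarAlgAut_apply, Matrix.mul_apply]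
      refine Finset.sum_congr rfl fun i _ => ?_
      simp only [Matrix.mul_diagonal, Matrix.star_apply, star_trivial, Function.comp_apply]
      ring_nf
      simp [hUdef, hlamdef]
      exact Or.inl (mul_comm _ _)
    rw [hYentry, Matrix.mul_apply,
      ← hsum (fun i => lam i * (U k i * U l i)) (fun i h0 => by simp [h0])]
    refine Finset.sum_congr rfl fun i _ => ?_
    simp only [conjTranspose_apply, star_trivial, hQdef, Matrix.of_apply]
    rw [show Real.sqrt (lam i.1) * U k i.1 * (Real.sqrt (lam i.1) * U l i.1)
        = (Real.sqrt (lam i.1) * Real.sqrt (lam i.1)) * (U k i.1 * U l i.1) by ring,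
      Real.mul_self_sqrt (hlam0 i.1)]
  have hQHQ : Qᴴ * Q = Matrix.diagonal (fun i : Pt => lam i.1) := by
    ext i j
    have horth : ∑ k, U k i.1 * U k j.1 = if i.1 = j.1 then 1 else 0 := by
      have h := congrFun (congrFun hUnit i.1) j.1
      simpa [Matrix.mul_apply, Matrix.star_apply, Matrix.one_apply] using h
    have hmain : (Qᴴ * Q) i j
        = Real.sqrt (lam i.1) * Real.sqrt (lam j.1) * ∑ k, U k i.1 * U k j.1 := by
      rw [Matrix.mul_apply, Finset.mul_sum]
      refine Finset.sum_congr rfl fun k _ => ?_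
      simp only [conjTranspose_apply, star_trivial, hQdef, Matrix.of_apply]
      ring
    rw [hmain, horth]
    by_cases hij : i = j
    · subst hij
      rw [if_pos rfl, Matrix.diagonal_apply_eq, mul_one, Real.mul_self_sqrt (hlam0 i.1)]
    · rw [if_neg (fun h => hij (Subtype.ext h)), Matrix.diagonal_apply_ne _ hij, mul_zero]
  -- a nonzero symmetric perturbation
  have hmT : m < Fintype.card {p : Pt × Pt // p.1 ≤ p.2} := by
    have h2c := two_mul_card_pairs Pt
    rw [hrank] at hlt
    rw [← h2c] at hlt
    omega
  obtain ⟨f, hfker, hfne⟩ :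
      ∃ f : ({p : Pt × Pt // p.1 ≤ p.2} → ℝ),
        (∀ j, ((Qᴴ * A j * Q) * symOf f).trace = 0) ∧ f ≠ 0 := by
    set φ : ({p : Pt × Pt // p.1 ≤ p.2} → ℝ) →ₗ[ℝ] (Fin m → ℝ) :=
      { toFun := fun f j => ((Qᴴ * A j * Q) * symOf f).trace
        map_add' := fun f g => by
          funext j
          simp [symOf_add, Matrix.mul_add, Matrix.trace_add]
        map_smul' := fun r f => by
          funext j
          simp [symOf_smul, Matrix.mul_smul, Matrix.trace_smul] } with hφdef
    have hker : LinearMap.ker φ ≠ ⊥ := by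
      apply LinearMap.ker_ne_bot_of_finrank_lt
      simpa [Module.finrank_fintype_fun_eq_card] using hmT
    obtain ⟨f, hf, hfne⟩ := Submodule.exists_mem_ne_zero_of_ne_bot hker
    refine ⟨f, fun j => ?_, hfne⟩
    have := congrFun (LinearMap.mem_ker.mp hf) j
    simpa [hφdef] using this
  set S : Matrix Pt Pt ℝ := symOf f with hSdef
  have hSsymm : S.IsSymm := symOf_isSymm f
  set c : ℝ := ∑ i, ∑ j, |S i j| with hcdef
  have hc0 : 0 ≤ c := Finset.sum_nonneg fun i _ =>
    Finset.sum_nonneg fun j _ => abs_nonneg _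
  set ε : ℝ := (c + 1)⁻¹ with hεdef
  have hε0 : 0 < ε := inv_pos.mpr (by linarith)
  set Z : Matrix (Fin d) (Fin d) ℝ := Q * S * Qᴴ with hZdef
  have hRT : ∀ {a b : Type} [Fintype a] [Fintype b] (M : Matrix a b ℝ), Mᴴ = Mᵀ := by
    intro a b _ _ M
    ext i j
    simp [conjTranspose_apply]
  have hZsymm : Z.IsSymm := by
    show Zᵀ = Z
    rw [hZdef, Matrix.transpose_mul, Matrix.transpose_mul, hRT Q, Matrix.transpose_transpose,
      hSsymm.eq, ← hRT Q, Matrix.mul_assoc]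
  -- membership of the perturbed points
  have hmem : ∀ δ : ℝ, |δ| * c ≤ 1 → Y + δ • Z ∈ C := by
    intro δ hδc
    have hfact : Y + δ • Z = Q * (1 + δ • S) * Qᴴ := by
      rw [Matrix.mul_add, Matrix.add_mul, Matrix.mul_one, hQQH, Matrix.mul_smul,
        Matrix.smul_mul, hZdef]
    rw [hC]
    refine ⟨hYsymm.add (hZsymm.smul δ), ?_, fun j => ?_⟩
    · rw [hfact]
      exact (one_add_smul_posSemidef S hSsymm δ hδc).mul_mul_conjTranspose_same Q
    · have hAZ : (A j * Z).trace = ((Qᴴ * A j * Q) * S).trace := by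
        rw [hZdef,
          show A j * (Q * S * Qᴴ) = (A j * Q * S) * Qᴴ by simp [Matrix.mul_assoc],
          Matrix.trace_mul_comm]
        simp [Matrix.mul_assoc]
      rw [Matrix.mul_add, Matrix.trace_add, Matrix.mul_smul, Matrix.trace_smul, hAZ,
        hfker j, smul_zero, add_zero, hYtr j]
  have habs : |ε| * c ≤ 1 := by
    rw [abs_of_pos hε0, hεdef]
    rw [inv_mul_le_iff₀ (by linarith)]
    linarith
  have habs' : |(-ε)| * c ≤ 1 := by rwa [abs_neg]
  have h1 : Y + (-ε) • Z ∈ C := hmem _ habs'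
  have h2 : Y + ε • Z ∈ C := hmem _ habs
  have hseg : Y ∈ openSegment ℝ (Y + (-ε) • Z) (Y + ε • Z) := by
    refine ⟨1/2, 1/2, by norm_num, by norm_num, by norm_num, ?_⟩
    module
  have hZ0 : Z = 0 := by
    have := hext h2 h1 (by rwa [openSegment_symm])
    have h3 : ε • Z = 0 := by
      have := congrArg (fun W => W - Y) this
      simpa [add_sub_cancel_left] using this
    have := congrArg (fun W => ε⁻¹ • W) h3
    simpa [smul_smul, inv_mul_cancel₀ (ne_of_gt hε0)] using this
  -- Z = 0 forces S = 0, then f = 0, contradiction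
  have hS0 : S = 0 := by
    have h5 : Matrix.diagonal (fun i : Pt => lam i.1) * S
        * Matrix.diagonal (fun i : Pt => lam i.1) = 0 := by
      rw [← hQHQ, show Qᴴ * Q * S * (Qᴴ * Q) = Qᴴ * (Q * S * Qᴴ) * Q by
        simp [Matrix.mul_assoc], ← hZdef, hZ0]
      simp
    ext i j
    have h6 := congrFun (congrFun h5 i) j
    simp only [Matrix.mul_diagonal, Matrix.diagonal_mul, Matrix.zero_apply] at h6
    have h7 : lam i.1 * (S i j * lam j.1) = 0 := by linarith [h6]
    rcases mul_eq_zero.mp h7 with h | h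
    · exact absurd h i.2
    rcases mul_eq_zero.mp h with h' | h'
    · simpa using h'
    · exact absurd h' j.2
  exact hfne (symOf_eq_zero f hS0)
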